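/- arXiv:2403.06957 — 3 statements merged into one kernel-verified Lean document; each statement's English description precedes it below -/
import Mathlib

section
/- For all subsets A, B of n̄, there exists α ∈ IOF_n^par with dom(α) = A and im(α) = B if and only if A ∼ B. -/
namespace IOFpar

/-- A partial injection on the chain `{1, …, n}`: a partial function with domain and
image contained in `{1, …, n}` that is injective where defined. -/
structure PInj (n : ℕ) where
  f : ℕ → Option ℕ
  mem_bounds : ∀ ⦃x y : ℕ⦄, f x = some y → x ∈ Finset.Icc 1 n ∧ y ∈ Finset.Icc 1 n
  inj : ∀ ⦃x₁ x₂ y : ℕ⦄, f x₁ = some y → f x₂ = some y → x₁ = x₂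

/-- The domain of a partial injection. -/
def PInj.dom {n : ℕ} (α : PInj n) : Finset ℕ :=
  (Finset.Icc 1 n).filter fun x => (α.f x).isSome

open Classical in
/-- The image of a partial injection. -/
noncomputable def PInj.im {n : ℕ} (α : PInj n) : Finset ℕ :=
  (Finset.Icc 1 n).filter fun y => ∃ x, α.f x = some y

/-- The rank of a partial injection: the size of its domain. -/
def PInj.rank {n : ℕ} (α : PInj n) : ℕ := α.dom.card

/-- The value of `α` at `x` (with junk value `0` outside the domain). -/
def PInj.app {n : ℕ} (α : PInj n) (x : ℕ) : ℕ := (α.f x).getD 0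

/-- Composition of partial injections: `α.comp β` applies `α` first, then `β`
(so it corresponds to the product `αβ` with arguments written on the left). -/
def PInj.comp {n : ℕ} (α β : PInj n) : PInj n where
  f x := (α.f x).bind β.f
  mem_bounds := by
    intro x y h
    rcases Option.bind_eq_some_iff.mp h with ⟨z, hz, hzy⟩
    exact ⟨(α.mem_bounds hz).1, (β.mem_bounds hzy).2⟩
  inj := by
    intro x₁ x₂ y h₁ h₂
    rcases Option.bind_eq_some_iff.mp h₁ with ⟨z₁, hz₁, hz₁y⟩
    rcases Option.bind_eq_some_iff.mp h₂ with ⟨z₂, hz₂, hz₂y⟩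
    obtain rfl : z₁ = z₂ := β.inj hz₁y hz₂y
    exact α.inj hz₁ hz₂

/-- The empty transformation `ε`. -/
def epsilon (n : ℕ) : PInj n where
  f _ := none
  mem_bounds := by intro x y h; simp at h
  inj := by intro x₁ x₂ y h; simp at h

/-- The fence (zig-zag) order on `{1, …, n}`: `k ≺ m` iff `|k - m| = 1`, `k` is odd
and `m` is even. -/
def fence (k m : ℕ) : Prop := (m = k + 1 ∨ k = m + 1) ∧ Odd k ∧ Even m

/-- `IOF n` is the set `IOF_n^par` of all partial injections on `{1, …, n}` that are
order-preserving, parity-preserving, fence-preserving, and whose inverse is also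
fence-preserving. -/
def IOF (n : ℕ) : Set (PInj n) :=
  {α | (∀ ⦃x y x' y' : ℕ⦄, α.f x = some x' → α.f y = some y' → x < y → x' < y') ∧
       (∀ ⦃x y : ℕ⦄, α.f x = some y → x % 2 = y % 2) ∧
       (∀ ⦃x y x' y' : ℕ⦄, α.f x = some x' → α.f y = some y' → fence x y → fence x' y') ∧
       (∀ ⦃x y x' y' : ℕ⦄, α.f x = some x' → α.f y = some y' → fence x' y' → fence x y)}

/-- The increasing enumeration of a finite set of naturals. -/
def sortedList (A : Finset ℕ) : List ℕ := A.sort (· ≤ ·)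

/-- The relation `∼` on subsets of `{1, …, n}`:
`A ∼ B` iff `|A| = |B|`, corresponding elements (in increasing order) have the
same parity, and consecutive elements are at distance 1 in `A` iff they are in `B`. -/
def sim (A B : Finset ℕ) : Prop :=
  A.card = B.card ∧
  (∀ (r : ℕ) (hA : r < (sortedList A).length) (hB : r < (sortedList B).length),
    (sortedList A)[r] % 2 = (sortedList B)[r] % 2) ∧
  (∀ (r : ℕ) (hA : r + 1 < (sortedList A).length) (hB : r + 1 < (sortedList B).length),
    ((sortedList A)[r + 1] = (sortedList A)[r] + 1 ↔
      (sortedList B)[r + 1] = (sortedList B)[r] + 1))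

/-- `P ⊆ P(n̄)` is admissible: it contains `∅`, is convex, and is closed under `∼`. -/
def Admissible (n : ℕ) (P : Set (Finset ℕ)) : Prop :=
  (∀ A ∈ P, A ⊆ Finset.Icc 1 n) ∧
  (∅ : Finset ℕ) ∈ P ∧
  (∀ A ∈ P, ∀ B ∈ P, ∀ C : Finset ℕ, A ⊆ C → C ⊆ B → C ∈ P) ∧
  (∀ y ∈ P, ∀ z : Finset ℕ, z ⊆ Finset.Icc 1 n → sim z y → z ∈ P)

/-- `I_X = {α ∈ IOF_n^par : dom(α) ∈ X}`. -/
def IX (n : ℕ) (X : Set (Finset ℕ)) : Set (PInj n) :=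
  {α | α ∈ IOF n ∧ α.dom ∈ X}

/-- An ideal of the monoid `IOF_n^par`. -/
def IsIdeal (n : ℕ) (I : Set (PInj n)) : Prop :=
  I.Nonempty ∧ I ⊆ IOF n ∧ ∀ a ∈ I, ∀ b ∈ IOF n, a.comp b ∈ I ∧ b.comp a ∈ I

/-- `del y t` is `y^[t+1]` in the paper's (1-based) notation: `y` with its `t`-th
smallest element removed (`t` being 0-based here). -/
def del (y : Finset ℕ) (t : ℕ) : Finset ℕ := y.erase ((sortedList y).getD t 0)

/-- `x ⊑ y`: `x` is obtained from `y` by removing one element. -/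
def sqsub (x y : Finset ℕ) : Prop := ∃ t < y.card, x = del y t

/-- `A_Γ = {Δ ∈ P : Δ ∼ Γ}`. -/
def Aset (P : Set (Finset ℕ)) (Γ : Finset ℕ) : Set (Finset ℕ) :=
  {Δ ∈ P | sim Δ Γ}

/-- `B_Γ = {Δ^[t] : Δ ∈ A_Γ, t ∈ {1,…,|Δ|}}`. -/
def Bset (P : Set (Finset ℕ)) (Γ : Finset ℕ) : Set (Finset ℕ) :=
  {D | ∃ Δ ∈ Aset P Γ, ∃ t < Δ.card, D = del Δ t}

/-- `B = {B_Γ : Γ ∈ P, |Γ| ≥ 2, |A_Γ| ≥ 2}`. -/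
def Bfam (P : Set (Finset ℕ)) : Set (Set (Finset ℕ)) :=
  {E | ∃ Γ ∈ P, 2 ≤ Γ.card ∧ 2 ≤ (Aset P Γ).ncard ∧ E = Bset P Γ}

/-- `C = {{g} : g ∈ P, (g ⊑ y for some y ∈ P with y ≁ z for all z ∈ P \ {y}) or
(g ⋢ z for all z ∈ P)}`. -/
def Cfam (P : Set (Finset ℕ)) : Set (Set (Finset ℕ)) :=
  {D | ∃ g ∈ P, D = {g} ∧
    ((∃ y ∈ P, sqsub g y ∧ ∀ z ∈ P, z ≠ y → ¬ sim y z) ∨ (∀ z ∈ P, ¬ sqsub g z))}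

/-- `BC_{Δ₁} = {Δ ∈ B ∪ C : x ∼ y for all x ∈ Δ, y ∈ Δ₁}`. -/
def BCset (P : Set (Finset ℕ)) (Δ₁ : Set (Finset ℕ)) : Set (Set (Finset ℕ)) :=
  {Δ ∈ Bfam P ∪ Cfam P | ∀ x ∈ Δ, ∀ y ∈ Δ₁, sim x y}

/-- `T_Δ = {c ∈ I_P : dom(c) ∈ Δ, im(c) ∈ Δ}`. -/
def Tset (n : ℕ) (P : Set (Finset ℕ)) (Δ : Set (Finset ℕ)) : Set (PInj n) :=
  {c ∈ IX n P | c.dom ∈ Δ ∧ c.im ∈ Δ}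

/-- `T_Q` for a pair `Q = (Q₁, Q₂)`. -/
def TQ (n : ℕ) (P : Set (Finset ℕ)) (Q₁ Q₂ : Set (Set (Finset ℕ))) : Set (PInj n) :=
  {c ∈ IX n P | (∃ Δ ∈ Q₁, c.dom ∈ Δ) ∧ (∃ Δ ∈ Q₂, c.im ∈ Δ)}

/-- `I_P^u`: the elements of `I_P` that are not expressible in the special product form. -/
def Iu (n : ℕ) (P : Set (Finset ℕ)) : Set (PInj n) :=
  {α ∈ IX n P | ¬ ∃ y₁ ∈ P, ∃ z₁ ∈ P, ∃ y₂ ∈ P, ∃ z₂ ∈ P, ∃ r < y₁.card, ∃ s < y₁.card,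
    y₁.card = z₁.card ∧ 2 ≤ y₁.card ∧
    sim y₂ y₁ ∧ sim z₂ z₁ ∧
    del y₁ r = y₁ ∩ z₁ ∧ del z₁ s = y₁ ∩ z₁ ∧
    sim (del y₂ r) (del z₂ s) ∧ sim (del z₂ s) (y₁ ∩ z₁) ∧
    α.dom = del y₂ r ∧ α.im = del z₂ s}

/-- `T` is a subsemigroup of `S` (a subset of `S` closed under composition). -/
def IsSubsemigroup (n : ℕ) (S T : Set (PInj n)) : Prop :=
  T ⊆ S ∧ ∀ a ∈ T, ∀ b ∈ T, a.comp b ∈ T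

/-- `T` is a maximal subsemigroup of `S`. -/
def IsMaxSubsemigroup (n : ℕ) (S T : Set (PInj n)) : Prop :=
  IsSubsemigroup n S T ∧ T ≠ S ∧
  ∀ U : Set (PInj n), IsSubsemigroup n S U → T ⊆ U → U ⊆ S → U = T ∨ U = S

/-- The left "translate set" `Ma` in the monoid `M = IOF_n^par`. -/
def lset (n : ℕ) (a : PInj n) : Set (PInj n) := {c | ∃ m ∈ IOF n, m.comp a = c}

/-- The right "translate set" `aM` in the monoid `M = IOF_n^par`. -/
def rset (n : ℕ) (a : PInj n) : Set (PInj n) := {c | ∃ m ∈ IOF n, a.comp m = c}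

/-- The two-sided "translate set" `MaM` in the monoid `M = IOF_n^par`. -/
def jset (n : ℕ) (a : PInj n) : Set (PInj n) :=
  {c | ∃ m₁ ∈ IOF n, ∃ m₂ ∈ IOF n, (m₁.comp a).comp m₂ = c}

/-!
An order-preserving partial injection with domain `A` and image `B` can only send the `r`-th
smallest element of `A` to the `r`-th smallest element of `B`, so everything is decided by this
matching. For it, parity preservation is the parity clause of `A ∼ B`; and two integers are
comparable in the fence order exactly when they are consecutive, so fence preservation by the
matching and by its inverse is the adjacency clause.
-/

lemma sortedList_sortedLT (A : Finset ℕ) : (sortedList A).SortedLT := Finset.sortedLT_sort A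

lemma mem_sortedList {A : Finset ℕ} {x : ℕ} : x ∈ sortedList A ↔ x ∈ A := Finset.mem_sort _

lemma length_sortedList (A : Finset ℕ) : (sortedList A).length = A.card := Finset.length_sort _

lemma _root_.List.SortedLT.eq_add_one_of_getElem_eq_add_one {l : List ℕ} (hl : l.SortedLT)
    {i j : ℕ} {hi : i < l.length} {hj : j < l.length} (h : l[j] = l[i] + 1) : j = i + 1 := by
  have hij : i < j := hl.getElem_lt_getElem_iff.mp (by omega)
  by_contra hne
  have : l[i] < l[i + 1] := hl.getElem_lt_getElem_iff.mpr (by omega)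
  have : l[i + 1] < l[j] := hl.getElem_lt_getElem_iff.mpr (by omega)
  omega

lemma fence_or_fence_iff {x y : ℕ} (hxy : x < y) : fence x y ∨ fence y x ↔ y = x + 1 := by
  simp only [fence, Nat.odd_iff, Nat.even_iff]
  omega

namespace PInj

variable {n : ℕ} (α : PInj n)

lemma mem_dom_iff {x : ℕ} : x ∈ α.dom ↔ ∃ y, α.f x = some y := by
  simp only [dom, Finset.mem_filter, Option.isSome_iff_exists, and_iff_right_iff_imp]
  rintro ⟨y, hy⟩
  exact (α.mem_bounds hy).1

lemma mem_im_iff {y : ℕ} : y ∈ α.im ↔ ∃ x, α.f x = some y := by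
  simp only [im, Finset.mem_filter, and_iff_right_iff_imp]
  rintro ⟨x, hx⟩
  exact (α.mem_bounds hx).2

lemma app_eq_of_f_eq_some {x y : ℕ} (h : α.f x = some y) : α.app x = y := by
  simp [app, h]

end PInj

def sortedMatch (A B : Finset ℕ) (x y : ℕ) : Prop :=
  ∃ r : ℕ, (sortedList A)[r]? = some x ∧ (sortedList B)[r]? = some y

lemma sortedMatch_getElem {A B : Finset ℕ} {r : ℕ} (hA : r < (sortedList A).length)
    (hB : r < (sortedList B).length) : sortedMatch A B (sortedList A)[r] (sortedList B)[r] :=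
  ⟨r, List.getElem?_eq_getElem hA, List.getElem?_eq_getElem hB⟩

lemma sortedMatch.exists_getElem {A B : Finset ℕ} {x y : ℕ} (h : sortedMatch A B x y) :
    ∃ r, ∃ (hA : r < (sortedList A).length) (hB : r < (sortedList B).length),
      (sortedList A)[r] = x ∧ (sortedList B)[r] = y := by
  obtain ⟨r, hx, hy⟩ := h
  obtain ⟨hA, rfl⟩ := List.getElem?_eq_some_iff.mp hx
  obtain ⟨hB, rfl⟩ := List.getElem?_eq_some_iff.mp hy
  exact ⟨r, hA, hB, rfl, rfl⟩

def PInj.IsSortedMatching {n : ℕ} (α : PInj n) (A B : Finset ℕ) : Prop :=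
  ∀ x y, α.f x = some y ↔ sortedMatch A B x y

def PInj.OrderPreserving {n : ℕ} (α : PInj n) : Prop :=
  ∀ ⦃x y x' y' : ℕ⦄, α.f x = some x' → α.f y = some y' → x < y → x' < y'

namespace PInj.OrderPreserving

variable {n : ℕ} {α : PInj n}

lemma map_app_sortedList_dom (hα : α.OrderPreserving) :
    (sortedList α.dom).map α.app = sortedList α.im := by
  apply List.SortedLT.eq_of_mem_iff _ (sortedList_sortedLT _)
  · intro z
    simp only [List.mem_map, mem_sortedList, α.mem_dom_iff, α.mem_im_iff]
    constructor
    · rintro ⟨x, ⟨y, hy⟩, rfl⟩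
      exact ⟨x, by rwa [α.app_eq_of_f_eq_some hy]⟩
    · rintro ⟨x, hx⟩
      exact ⟨x, ⟨z, hx⟩, α.app_eq_of_f_eq_some hx⟩
  · rw [List.sortedLT_iff_pairwise, List.pairwise_map]
    refine (List.sortedLT_iff_pairwise.mp (sortedList_sortedLT _)).imp_of_mem ?_
    intro x y hx hy hxy
    obtain ⟨x', hx'⟩ := α.mem_dom_iff.mp (mem_sortedList.mp hx)
    obtain ⟨y', hy'⟩ := α.mem_dom_iff.mp (mem_sortedList.mp hy)
    rw [α.app_eq_of_f_eq_some hx', α.app_eq_of_f_eq_some hy']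
    exact hα hx' hy' hxy

lemma isSortedMatching (hα : α.OrderPreserving) : α.IsSortedMatching α.dom α.im := by
  intro x y
  rw [sortedMatch, ← hα.map_app_sortedList_dom]
  simp only [List.getElem?_map, Option.map_eq_some_iff]
  constructor
  · intro h
    obtain ⟨r, hr⟩ := List.mem_iff_getElem?.mp (mem_sortedList.mpr (α.mem_dom_iff.mpr ⟨y, h⟩))
    exact ⟨r, hr, x, hr, α.app_eq_of_f_eq_some h⟩
  · rintro ⟨r, hx, x', hx', rfl⟩
    obtain rfl : x' = x := Option.some_injective _ (hx'.symm.trans hx)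
    obtain ⟨y, hy⟩ := α.mem_dom_iff.mp (mem_sortedList.mp (List.mem_of_getElem? hx))
    rwa [α.app_eq_of_f_eq_some hy]

lemma card_dom (hα : α.OrderPreserving) : α.dom.card = α.im.card := by
  rw [← length_sortedList, ← length_sortedList, ← hα.map_app_sortedList_dom, List.length_map]

end PInj.OrderPreserving

def sortedMatching {n : ℕ} {A B : Finset ℕ} (hA : A ⊆ Finset.Icc 1 n)
    (hB : B ⊆ Finset.Icc 1 n) : PInj n where
  f x := if x ∈ A then (sortedList B)[(sortedList A).idxOf x]? else none
  mem_bounds := by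
    intro x y h
    split_ifs at h with hx
    exact ⟨hA hx, hB (mem_sortedList.mp (List.mem_of_getElem? h))⟩
  inj := by
    intro x₁ x₂ y h₁ h₂
    split_ifs at h₁ h₂ with hx₁
    have hlt : (sortedList A).idxOf x₁ < (sortedList B).length :=
      (List.getElem?_eq_some_iff.mp h₁).1
    have hidx := (List.getElem?_inj hlt (sortedList_sortedLT B).nodup).mp (h₁.trans h₂.symm)
    exact (List.idxOf_inj (mem_sortedList.mpr hx₁)).mp hidx

lemma isSortedMatching_sortedMatching {n : ℕ} {A B : Finset ℕ} (hA : A ⊆ Finset.Icc 1 n)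
    (hB : B ⊆ Finset.Icc 1 n) : (sortedMatching hA hB).IsSortedMatching A B := by
  intro x y
  simp only [sortedMatching]
  constructor
  · intro h
    split_ifs at h with hx
    exact ⟨_, List.getElem?_idxOf (mem_sortedList.mpr hx), h⟩
  · rintro ⟨r, hx, hy⟩
    obtain ⟨hr, rfl⟩ := List.getElem?_eq_some_iff.mp hx
    rw [if_pos (mem_sortedList.mp (List.getElem_mem hr)),
      (sortedList_sortedLT A).nodup.idxOf_getElem, hy]

lemma sim.symm {A B : Finset ℕ} (h : sim A B) : sim B A :=
  ⟨h.1.symm, fun r hB hA => (h.2.1 r hA hB).symm, fun r hB hA => (h.2.2 r hA hB).symm⟩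

lemma sim.fence_getElem {A B : Finset ℕ} (h : sim A B) {i j : ℕ}
    (hiA : i < (sortedList A).length) (hiB : i < (sortedList B).length)
    (hjA : j < (sortedList A).length) (hjB : j < (sortedList B).length)
    (hfence : fence (sortedList A)[i] (sortedList A)[j]) :
    fence (sortedList B)[i] (sortedList B)[j] := by
  have hsucc {i j : ℕ} (hiA : i < (sortedList A).length) (hiB : i < (sortedList B).length)
      (hjA : j < (sortedList A).length) (hjB : j < (sortedList B).length)
      (hadj : (sortedList A)[j] = (sortedList A)[i] + 1) :
      (sortedList B)[j] = (sortedList B)[i] + 1 := by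
    obtain rfl := (sortedList_sortedLT A).eq_add_one_of_getElem_eq_add_one hadj
    exact (h.2.2 i hjA hjB).mp hadj
  have hpi := h.2.1 i hiA hiB
  have hpj := h.2.1 j hjA hjB
  simp only [fence, Nat.odd_iff, Nat.even_iff] at hfence ⊢
  obtain ⟨hadj | hadj, hodd, heven⟩ := hfence
  · exact ⟨.inl (hsucc hiA hiB hjA hjB hadj), by omega, by omega⟩
  · exact ⟨.inr (hsucc hjA hjB hiA hiB hadj), by omega, by omega⟩

namespace PInj.IsSortedMatching

variable {n : ℕ} {α : PInj n} {A B : Finset ℕ}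

lemma sim_of_mem_IOF (hα : α.IsSortedMatching A B)
    (hcard : A.card = B.card) (hIOF : α ∈ IOF n) : sim A B := by
  obtain ⟨-, hpar, hfence, hfence_inv⟩ := hIOF
  have hf {r : ℕ} (hA : r < (sortedList A).length) (hB : r < (sortedList B).length) :
      α.f (sortedList A)[r] = some (sortedList B)[r] :=
    (hα _ _).mpr (sortedMatch_getElem hA hB)
  refine ⟨hcard, fun r hA hB => hpar (hf hA hB), fun r hA hB => ?_⟩
  have h₁ := hf (Nat.lt_of_succ_lt hA) (Nat.lt_of_succ_lt hB)
  have h₂ := hf hA hB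
  rw [← fence_or_fence_iff ((sortedList_sortedLT A).getElem_lt_getElem_iff.mpr r.lt_succ_self),
    ← fence_or_fence_iff ((sortedList_sortedLT B).getElem_lt_getElem_iff.mpr r.lt_succ_self)]
  exact ⟨Or.imp (hfence h₁ h₂) (hfence h₂ h₁), Or.imp (hfence_inv h₁ h₂) (hfence_inv h₂ h₁)⟩

lemma mem_IOF_of_sim (hα : α.IsSortedMatching A B) (h : sim A B) :
    α ∈ IOF n := by
  have hf {x y : ℕ} (hxy : α.f x = some y) := ((hα x y).mp hxy).exists_getElem
  refine ⟨?_, ?_, ?_, ?_⟩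
  · intro x y x' y' hx hy hxy
    obtain ⟨i, hiA, hiB, rfl, rfl⟩ := hf hx
    obtain ⟨j, hjA, hjB, rfl, rfl⟩ := hf hy
    rw [(sortedList_sortedLT A).getElem_lt_getElem_iff] at hxy
    exact (sortedList_sortedLT B).getElem_lt_getElem_iff.mpr hxy
  · intro x y hxy
    obtain ⟨i, hiA, hiB, rfl, rfl⟩ := hf hxy
    exact h.2.1 i hiA hiB
  · intro x y x' y' hx hy
    obtain ⟨i, hiA, hiB, rfl, rfl⟩ := hf hx
    obtain ⟨j, hjA, hjB, rfl, rfl⟩ := hf hy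
    exact h.fence_getElem hiA hiB hjA hjB
  · intro x y x' y' hx hy
    obtain ⟨i, hiA, hiB, rfl, rfl⟩ := hf hx
    obtain ⟨j, hjA, hjB, rfl, rfl⟩ := hf hy
    exact h.symm.fence_getElem hiB hiA hjB hjA

lemma dom_eq (hα : α.IsSortedMatching A B)
    (hcard : A.card = B.card) : α.dom = A := by
  ext x
  simp only [α.mem_dom_iff, hα x]
  constructor
  · rintro ⟨y, r, hx, -⟩
    exact mem_sortedList.mp (List.mem_of_getElem? hx)
  · intro hx
    obtain ⟨r, hr, rfl⟩ := List.getElem_of_mem (mem_sortedList.mpr hx)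
    exact ⟨_, sortedMatch_getElem hr (by rwa [length_sortedList, ← hcard, ← length_sortedList])⟩

lemma im_eq (hα : α.IsSortedMatching A B)
    (hcard : A.card = B.card) : α.im = B := by
  ext y
  simp only [α.mem_im_iff, fun x => hα x y]
  constructor
  · rintro ⟨x, r, -, hy⟩
    exact mem_sortedList.mp (List.mem_of_getElem? hy)
  · intro hy
    obtain ⟨r, hr, rfl⟩ := List.getElem_of_mem (mem_sortedList.mpr hy)
    exact ⟨_, sortedMatch_getElem (by rwa [length_sortedList, hcard, ← length_sortedList]) hr⟩

end PInj.IsSortedMatching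

theorem statement_2_general (n : ℕ) (A B : Finset ℕ)
    (hA : A ⊆ Finset.Icc 1 n) (hB : B ⊆ Finset.Icc 1 n) :
    (∃ α ∈ IOF n, α.dom = A ∧ α.im = B) ↔ sim A B := by
  constructor
  · rintro ⟨α, hIOF, rfl, rfl⟩
    have hα : α.OrderPreserving := hIOF.1
    exact hα.isSortedMatching.sim_of_mem_IOF hα.card_dom hIOF
  · intro h
    have hα := isSortedMatching_sortedMatching hA hB
    exact ⟨_, hα.mem_IOF_of_sim h, hα.dom_eq h.1, hα.im_eq h.1⟩

/-- For subsets `A, B ⊆ n̄`, there exists `α ∈ IOF_n^par` with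
`dom(α) = A` and `im(α) = B` iff `A ∼ B`. -/
theorem statement_2 (n : ℕ) (hn : 0 < n) (A B : Finset ℕ)
    (hA : A ⊆ Finset.Icc 1 n) (hB : B ⊆ Finset.Icc 1 n) :
    (∃ α ∈ IOF n, α.dom = A ∧ α.im = B) ↔ sim A B :=
  statement_2_general n A B hA hB

end IOFpar
end

section
/- For every α ∈ IOF_n^par, dom(α) ∼ im(α). -/
namespace IOFpar

/-! Since `α` is order-preserving, the increasing enumeration of `im α` is the pointwise image of
that of `dom α`. For `x < y`, being adjacent (`y = x + 1`) means being comparable in the fence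
order, and this is preserved in both directions because `α` and `α⁻¹` are fence-preserving. -/

theorem fence_or_fence_iff_s4 {a b : ℕ} (h : a < b) : fence a b ∨ fence b a ↔ b = a + 1 := by
  constructor
  · rintro (⟨hab, -⟩ | ⟨hab, -⟩) <;> omega
  · rintro rfl
    rcases Nat.even_or_odd a with ha | ha
    · exact Or.inr ⟨Or.inr rfl, ha.add_one, ha⟩
    · exact Or.inl ⟨Or.inl rfl, ha, ha.add_one⟩

theorem sortedList_image_of_strictMonoOn {A : Finset ℕ} {g : ℕ → ℕ}
    (hg : StrictMonoOn g (A : Set ℕ)) : sortedList (A.image g) = (sortedList A).map g := by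
  unfold sortedList Finset.sort
  rw [Finset.image_val_of_injOn hg.injOn]
  exact (Multiset.map_sort _ _ _ _ fun a ha b hb => (hg.le_iff_le ha hb).symm).symm

theorem sim_image_of_strictMonoOn {A : Finset ℕ} {g : ℕ → ℕ} (hg : StrictMonoOn g (A : Set ℕ))
    (hpar : ∀ x ∈ A, x % 2 = g x % 2)
    (hadj : ∀ x ∈ A, ∀ y ∈ A, x < y → (y = x + 1 ↔ g y = g x + 1)) :
    sim A (A.image g) := by
  have hsort := sortedList_image_of_strictMonoOn hg
  have hmem : ∀ (r : ℕ) (hr : r < (sortedList A).length), (sortedList A)[r] ∈ A :=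
    fun r hr => (Finset.mem_sort _).mp (List.getElem_mem hr)
  refine ⟨(Finset.card_image_of_injOn hg.injOn).symm, fun r hA hB => ?_, fun r hA hB => ?_⟩
  · simp only [hsort, List.getElem_map]
    exact hpar _ (hmem r hA)
  · simp only [hsort, List.getElem_map]
    refine hadj _ (hmem r (by omega)) _ (hmem (r + 1) hA) ?_
    exact List.pairwise_iff_getElem.mp (Finset.sortedLT_sort A).pairwise r (r + 1) _ hA
      (Nat.lt_succ_self r)

namespace PInj

variable {n : ℕ} (α : PInj n)

theorem f_eq_some_app {x : ℕ} (hx : x ∈ α.dom) : α.f x = some (α.app x) := by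
  obtain ⟨-, hx⟩ := Finset.mem_filter.mp hx
  obtain ⟨y, hy⟩ := Option.isSome_iff_exists.mp hx
  simp [PInj.app, hy]

theorem im_eq_image_app : α.im = α.dom.image α.app := by
  ext y
  simp only [PInj.im, PInj.dom, Finset.mem_filter, Finset.mem_image]
  constructor
  · rintro ⟨-, x, hx⟩
    exact ⟨x, ⟨(α.mem_bounds hx).1, by simp [hx]⟩, by simp [PInj.app, hx]⟩
  · rintro ⟨x, ⟨hxn, hx⟩, rfl⟩
    have hfx := α.f_eq_some_app (Finset.mem_filter.mpr ⟨hxn, hx⟩)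
    exact ⟨(α.mem_bounds hfx).2, x, hfx⟩

variable {α}

theorem strictMonoOn_app_of_mem_IOF (hα : α ∈ IOF n) : StrictMonoOn α.app (α.dom : Set ℕ) :=
  fun _ hx _ hy hxy => hα.1 (α.f_eq_some_app hx) (α.f_eq_some_app hy) hxy

theorem fence_app_iff_of_mem_IOF (hα : α ∈ IOF n) {x y : ℕ} (hx : x ∈ α.dom) (hy : y ∈ α.dom) :
    fence (α.app x) (α.app y) ↔ fence x y :=
  ⟨hα.2.2.2 (α.f_eq_some_app hx) (α.f_eq_some_app hy),
    hα.2.2.1 (α.f_eq_some_app hx) (α.f_eq_some_app hy)⟩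

theorem app_eq_app_add_one_iff_of_mem_IOF (hα : α ∈ IOF n) {x y : ℕ} (hx : x ∈ α.dom)
    (hy : y ∈ α.dom) (hxy : x < y) : α.app y = α.app x + 1 ↔ y = x + 1 := by
  rw [← fence_or_fence_iff_s4 hxy, ← fence_or_fence_iff_s4 (strictMonoOn_app_of_mem_IOF hα hx hy hxy),
    fence_app_iff_of_mem_IOF hα hx hy, fence_app_iff_of_mem_IOF hα hy hx]

end PInj

theorem statement_4_general (n : ℕ) (α : PInj n) (hα : α ∈ IOF n) :
    sim α.dom α.im := by
  rw [α.im_eq_image_app]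
  exact sim_image_of_strictMonoOn (PInj.strictMonoOn_app_of_mem_IOF hα)
    (fun x hx => hα.2.1 (α.f_eq_some_app hx))
    (fun x hx y hy hxy => (PInj.app_eq_app_add_one_iff_of_mem_IOF hα hx hy hxy).symm)

/-- For every `α ∈ IOF_n^par`, `dom(α) ∼ im(α)`. -/
theorem statement_4 (n : ℕ) (hn : 0 < n) (α : PInj n) (hα : α ∈ IOF n) :
    sim α.dom α.im :=
  statement_4_general n α hα

end IOFpar
end

section
/- In the monoid M = IOF_n^par, for all a, b ∈ M: (1) a L b if and only if im(a) = im(b); (2) a R b if and only if dom(a) = dom(b); (3) a H b if and only if a = b. -/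
/-
An element of `IOF_n^par` together with its inverse `a⁻¹` (again in the monoid) gives the usual
inverse-monoid description of the one-sided ideals: `a = (a b⁻¹) b` as soon as `im a ⊆ im b`,
and `a = b (b⁻¹ a)` as soon as `dom a ⊆ dom b`, while conversely `im (m b) ⊆ im b` and
`dom (b m) ⊆ dom b`. Hence `Ma ⊆ Mb ↔ im a ⊆ im b` and `aM ⊆ bM ↔ dom a ⊆ dom b`. Finally, an
order-preserving partial injection sends the `i`-th element of its domain to the `i`-th element
of its image, so it is determined by its domain and image, and `H` is trivial.
-/

namespace IOFpar

namespace PInj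

variable {n : ℕ}

/-- The order-preserving condition, the first clause in the definition of `IOF`. -/
def StrictMono (a : PInj n) : Prop :=
  ∀ ⦃x y x' y' : ℕ⦄, a.f x = some x' → a.f y = some y' → x < y → x' < y'

theorem ext {a b : PInj n} (h : ∀ x, a.f x = b.f x) : a = b := by
  cases a; cases b; simpa using funext h

theorem mem_dom {a : PInj n} {x : ℕ} : x ∈ a.dom ↔ ∃ y, a.f x = some y := by
  simp only [dom, Finset.mem_filter, Option.isSome_iff_exists, and_iff_right_iff_imp]
  rintro ⟨y, hy⟩
  exact (a.mem_bounds hy).1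

theorem mem_im {a : PInj n} {y : ℕ} : y ∈ a.im ↔ ∃ x, a.f x = some y := by
  classical
  simp only [im, Finset.mem_filter, and_iff_right_iff_imp]
  rintro ⟨x, hx⟩
  exact (a.mem_bounds hx).2

theorem f_eq_none_of_notMem_dom {a : PInj n} {x : ℕ} (hx : x ∉ a.dom) : a.f x = none :=
  Option.eq_none_iff_forall_ne_some.mpr fun y hy => hx (mem_dom.mpr ⟨y, hy⟩)

theorem f_eq_some_app_s5 {a : PInj n} {x : ℕ} (hx : x ∈ a.dom) : a.f x = some (a.app x) := by
  obtain ⟨y, hy⟩ := mem_dom.mp hx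
  simp [app, hy]

@[simp]
theorem comp_f (a b : PInj n) (x : ℕ) : (a.comp b).f x = (a.f x).bind b.f := rfl

theorem comp_assoc (a b c : PInj n) : (a.comp b).comp c = a.comp (b.comp c) :=
  ext fun x => by simp only [comp_f]; cases a.f x <;> rfl

theorem im_comp_subset (a b : PInj n) : (a.comp b).im ⊆ b.im := by
  intro y hy
  obtain ⟨x, hx⟩ := mem_im.mp hy
  obtain ⟨z, -, hz⟩ := Option.bind_eq_some_iff.mp hx
  exact mem_im.mpr ⟨z, hz⟩

theorem dom_comp_subset (a b : PInj n) : (a.comp b).dom ⊆ a.dom := by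
  intro x hx
  obtain ⟨y, hy⟩ := mem_dom.mp hx
  obtain ⟨z, hz, -⟩ := Option.bind_eq_some_iff.mp hy
  exact mem_dom.mpr ⟨z, hz⟩

def refl (n : ℕ) : PInj n where
  f x := if x ∈ Finset.Icc 1 n then some x else none
  mem_bounds := by
    intro x y h
    split_ifs at h with hx
    cases h
    exact ⟨hx, hx⟩
  inj := by
    intro x₁ x₂ y h₁ h₂
    split_ifs at h₁ h₂
    cases h₁
    cases h₂
    rfl

theorem refl_f_eq_some {x y : ℕ} (h : (refl n).f x = some y) : x = y := by
  simp only [refl] at h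
  split_ifs at h
  exact Option.some.inj h

theorem refl_f_of_mem {x : ℕ} (hx : x ∈ Finset.Icc 1 n) : (refl n).f x = some x := if_pos hx

theorem refl_f_of_notMem {x : ℕ} (hx : x ∉ Finset.Icc 1 n) : (refl n).f x = none := if_neg hx

theorem refl_comp (a : PInj n) : (refl n).comp a = a := by
  refine ext fun x => ?_
  by_cases hx : x ∈ Finset.Icc 1 n
  · rw [comp_f, refl_f_of_mem hx, Option.bind_some]
  · have hax : a.f x = none :=
      Option.eq_none_iff_forall_ne_some.mpr fun _ h => hx (a.mem_bounds h).1
    rw [comp_f, refl_f_of_notMem hx, hax, Option.bind_none]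

theorem comp_refl (a : PInj n) : a.comp (refl n) = a := by
  refine ext fun x => ?_
  cases h : a.f x with
  | none => rw [comp_f, h, Option.bind_none]
  | some y => rw [comp_f, h, Option.bind_some, refl_f_of_mem (a.mem_bounds h).2]

open Classical in
noncomputable def inv (a : PInj n) : PInj n where
  f y := if h : ∃ x, a.f x = some y then some h.choose else none
  mem_bounds := by
    intro y x h
    split_ifs at h with hex
    cases h
    exact (a.mem_bounds hex.choose_spec).symm
  inj := by
    intro y₁ y₂ x h₁ h₂
    split_ifs at h₁ h₂ with hex₁ hex₂
    have hy₁ := hex₁.choose_spec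
    have hy₂ := hex₂.choose_spec
    rw [Option.some.inj h₁] at hy₁
    rw [Option.some.inj h₂] at hy₂
    exact Option.some.inj (hy₁.symm.trans hy₂)

theorem inv_f_eq_some {a : PInj n} {x y : ℕ} : a.inv.f y = some x ↔ a.f x = some y := by
  have hx : ∀ hex : ∃ x, a.f x = some y, a.inv.f y = some hex.choose := fun hex => by
    simp [inv, hex]
  constructor
  · intro h
    by_cases hex : ∃ x, a.f x = some y
    · rw [hx hex] at h
      exact Option.some.inj h ▸ hex.choose_spec
    · simp [inv, hex] at h
  · intro h
    have hex : ∃ x, a.f x = some y := ⟨x, h⟩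
    rw [hx hex, a.inj hex.choose_spec h]

theorem comp_inv_comp_of_im_subset {a b : PInj n} (h : a.im ⊆ b.im) :
    (a.comp b.inv).comp b = a := by
  refine ext fun x => ?_
  cases hx : a.f x with
  | none => simp [hx]
  | some y =>
    obtain ⟨z, hz⟩ := mem_im.mp (h (mem_im.mpr ⟨x, hx⟩))
    simp [hx, inv_f_eq_some.mpr hz, hz]

theorem comp_inv_comp_of_dom_subset {a b : PInj n} (h : a.dom ⊆ b.dom) :
    b.comp (b.inv.comp a) = a := by
  refine ext fun x => ?_
  cases hx : b.f x with
  | none =>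
    have hxa : x ∉ a.dom := fun hxa => by
      obtain ⟨y, hy⟩ := mem_dom.mp (h hxa)
      simp [hx] at hy
    rw [comp_f, hx, f_eq_none_of_notMem_dom hxa, Option.bind_none]
  | some y => rw [comp_f, hx, Option.bind_some, comp_f, inv_f_eq_some.mpr hx, Option.bind_some]

theorem card_im (a : PInj n) : a.im.card = a.rank :=
  (Finset.card_bij (fun x _ => a.app x) (fun x hx => mem_im.mpr ⟨x, f_eq_some_app_s5 hx⟩)
    (fun x₁ hx₁ x₂ hx₂ h => a.inj (f_eq_some_app_s5 hx₁) (h ▸ f_eq_some_app_s5 hx₂))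
    (fun y hy => by
      obtain ⟨x, hx⟩ := mem_im.mp hy
      exact ⟨x, mem_dom.mpr ⟨y, hx⟩, by simp [app, hx]⟩)).symm

/-- The stated form (with arbitrary `s`, `t`, `k`) lets two maps with the same domain and
image be compared at the same point without transporting `Fin k` along an equation. -/
theorem StrictMono.f_orderEmbOfFin {a : PInj n} (ha : a.StrictMono) {s t : Finset ℕ}
    (hs : a.dom = s) (ht : a.im = t) {k : ℕ} (hsk : s.card = k) (htk : t.card = k) (i : Fin k) :
    a.f (s.orderEmbOfFin hsk i) = some (t.orderEmbOfFin htk i) := by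
  subst hs ht
  set g : Fin k → ℕ := fun i => a.app (a.dom.orderEmbOfFin hsk i)
  have hg : ∀ i, a.f (a.dom.orderEmbOfFin hsk i) = some (g i) := fun i =>
    f_eq_some_app_s5 (Finset.orderEmbOfFin_mem _ _ i)
  have hg_eq : g = a.im.orderEmbOfFin htk :=
    Finset.orderEmbOfFin_unique htk (fun i => mem_im.mpr ⟨_, hg i⟩)
      (fun i j hij => ha (hg i) (hg j) ((a.dom.orderEmbOfFin hsk).strictMono hij))
  rw [hg, hg_eq]

theorem StrictMono.eq_of_dom_eq_of_im_eq {a b : PInj n} (ha : a.StrictMono)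
    (hb : b.StrictMono) (hd : a.dom = b.dom) (hi : a.im = b.im) : a = b := by
  refine ext fun x => ?_
  by_cases hx : x ∈ a.dom
  · have hx : x ∈ Set.range (a.dom.orderEmbOfFin rfl) := by
      rwa [Finset.range_orderEmbOfFin]
    obtain ⟨i, rfl⟩ := hx
    have hcard : a.im.card = a.dom.card := a.card_im
    rw [ha.f_orderEmbOfFin rfl rfl rfl hcard, hb.f_orderEmbOfFin hd.symm hi.symm rfl hcard]
  · rw [f_eq_none_of_notMem_dom hx, f_eq_none_of_notMem_dom (hd ▸ hx)]

end PInj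

open PInj

variable {n : ℕ}

theorem refl_mem_IOF : PInj.refl n ∈ IOF n := by
  refine ⟨fun x y x' y' hx hy => ?_, fun x y hx => refl_f_eq_some hx ▸ rfl,
    fun x y x' y' hx hy => ?_, fun x y x' y' hx hy => ?_⟩ <;>
  · obtain rfl := refl_f_eq_some hx
    obtain rfl := refl_f_eq_some hy
    exact fun h => h

theorem comp_mem_IOF {a b : PInj n} (ha : a ∈ IOF n) (hb : b ∈ IOF n) : a.comp b ∈ IOF n := by
  obtain ⟨ha_mono, ha_par, ha_fence, ha_fence_inv⟩ := ha
  obtain ⟨hb_mono, hb_par, hb_fence, hb_fence_inv⟩ := hb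
  refine ⟨?_, ?_, ?_, ?_⟩
  · intro x y x' y' hx hy hlt
    obtain ⟨z₁, hz₁, hz₁'⟩ := Option.bind_eq_some_iff.mp hx
    obtain ⟨z₂, hz₂, hz₂'⟩ := Option.bind_eq_some_iff.mp hy
    exact hb_mono hz₁' hz₂' (ha_mono hz₁ hz₂ hlt)
  · intro x y hx
    obtain ⟨z, hz, hz'⟩ := Option.bind_eq_some_iff.mp hx
    exact (ha_par hz).trans (hb_par hz')
  · intro x y x' y' hx hy hf
    obtain ⟨z₁, hz₁, hz₁'⟩ := Option.bind_eq_some_iff.mp hx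
    obtain ⟨z₂, hz₂, hz₂'⟩ := Option.bind_eq_some_iff.mp hy
    exact hb_fence hz₁' hz₂' (ha_fence hz₁ hz₂ hf)
  · intro x y x' y' hx hy hf
    obtain ⟨z₁, hz₁, hz₁'⟩ := Option.bind_eq_some_iff.mp hx
    obtain ⟨z₂, hz₂, hz₂'⟩ := Option.bind_eq_some_iff.mp hy
    exact ha_fence_inv hz₁ hz₂ (hb_fence_inv hz₁' hz₂' hf)

theorem inv_mem_IOF {a : PInj n} (ha : a ∈ IOF n) : a.inv ∈ IOF n := by
  obtain ⟨ha_mono, ha_par, ha_fence, ha_fence_inv⟩ := ha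
  refine ⟨?_, ?_, ?_, ?_⟩ <;> simp only [inv_f_eq_some]
  · intro x y x' y' hx hy hlt
    by_contra! hle
    rcases hle.lt_or_eq with hlt' | rfl
    · exact (ha_mono hy hx hlt').not_gt hlt
    · exact hlt.ne (Option.some.inj (hx.symm.trans hy))
  · exact fun x y hx => (ha_par hx).symm
  · exact fun x y x' y' hx hy => ha_fence_inv hx hy
  · exact fun x y x' y' hx hy => ha_fence hx hy

theorem lset_subset_lset_iff {a b : PInj n} (ha : a ∈ IOF n) (hb : b ∈ IOF n) :
    lset n a ⊆ lset n b ↔ a.im ⊆ b.im := by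
  constructor
  · intro h
    obtain ⟨m, -, rfl⟩ := h ⟨PInj.refl n, refl_mem_IOF, refl_comp a⟩
    exact im_comp_subset m b
  · rintro h c ⟨m, hm, rfl⟩
    refine ⟨m.comp (a.comp b.inv), comp_mem_IOF hm (comp_mem_IOF ha (inv_mem_IOF hb)), ?_⟩
    rw [comp_assoc, comp_inv_comp_of_im_subset h]

theorem rset_subset_rset_iff {a b : PInj n} (ha : a ∈ IOF n) (hb : b ∈ IOF n) :
    rset n a ⊆ rset n b ↔ a.dom ⊆ b.dom := by
  constructor
  · intro h
    obtain ⟨m, -, hm⟩ := h ⟨PInj.refl n, refl_mem_IOF, comp_refl a⟩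
    exact hm ▸ dom_comp_subset b m
  · rintro h c ⟨m, hm, rfl⟩
    refine ⟨(b.inv.comp a).comp m, comp_mem_IOF (comp_mem_IOF (inv_mem_IOF hb) ha) hm, ?_⟩
    rw [← comp_assoc, comp_inv_comp_of_dom_subset h]

theorem statement_5_general (n : ℕ) (a b : PInj n)
    (ha : a ∈ IOF n) (hb : b ∈ IOF n) :
    (lset n a = lset n b ↔ a.im = b.im) ∧
    (rset n a = rset n b ↔ a.dom = b.dom) ∧
    ((lset n a = lset n b ∧ rset n a = rset n b) ↔ a = b) := by
  have hL : lset n a = lset n b ↔ a.im = b.im := by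
    rw [Set.Subset.antisymm_iff, Finset.Subset.antisymm_iff, lset_subset_lset_iff ha hb,
      lset_subset_lset_iff hb ha]
  have hR : rset n a = rset n b ↔ a.dom = b.dom := by
    rw [Set.Subset.antisymm_iff, Finset.Subset.antisymm_iff, rset_subset_rset_iff ha hb,
      rset_subset_rset_iff hb ha]
  refine ⟨hL, hR, ⟨fun ⟨hl, hr⟩ => ?_, fun h => h ▸ ⟨rfl, rfl⟩⟩⟩
  exact StrictMono.eq_of_dom_eq_of_im_eq ha.1 hb.1 (hR.mp hr) (hL.mp hl)

/-- Green's relations `L`, `R`, `H` on the monoid `M = IOF_n^par`: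
`a L b` iff `im(a) = im(b)`; `a R b` iff `dom(a) = dom(b)`; `a H b` iff `a = b`. -/
theorem statement_5 (n : ℕ) (hn : 0 < n) (a b : PInj n)
    (ha : a ∈ IOF n) (hb : b ∈ IOF n) :
    (lset n a = lset n b ↔ a.im = b.im) ∧
    (rset n a = rset n b ↔ a.dom = b.dom) ∧
    ((lset n a = lset n b ∧ rset n a = rset n b) ↔ a = b) :=
  statement_5_general n a b ha hb

end IOFpar
end
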